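/- arXiv:1409.5291 — 4 statements merged into one kernel-verified Lean document; each statement's English description precedes it below -/
import Mathlib

section
/- Let P = N_k(μ_P, Φ_P⁻¹) and Q = N_k(μ_Q, Φ_Q⁻¹) be multivariate normal distributions on ℝ^k with symmetric positive-definite precision matrices Φ_P, Φ_Q. Then the Hyvärinen discrepancy D_H(P,Q) = ∫ ‖∇ log p(x) − ∇ log q(x)‖² p(x) dx equals tr(Φ_P − 2Φ_Q + Φ_P⁻¹ Φ_Q²) + ‖Φ_Q(μ_P − μ_Q)‖². -/
/-!
Whiten the precision matrix: pick `S` with `Sᵀ Φ_P S = 1`, so that `x = μ_P + S u` with `u`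
standard Gaussian has law `P`. In these coordinates the score difference
`Φ_Q (x - μ_Q) - Φ_P (x - μ_P)` is the affine map `-(M u - b)` with `M = (Φ_P - Φ_Q) S` and
`b = Φ_Q (μ_P - μ_Q)`. Each coordinate `(M u)_i` is centred with variance `‖M_i‖²`, so
`E ‖M u - b‖² = tr (M Mᵀ) + ‖b‖²`, and `S Sᵀ = Φ_P⁻¹` turns `tr (M Mᵀ)` into
`tr ((Φ_P - Φ_Q) Φ_P⁻¹ (Φ_P - Φ_Q)) = tr (Φ_P - 2 Φ_Q + Φ_P⁻¹ Φ_Q²)`.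
-/

open Real Matrix MeasureTheory ProbabilityTheory
open scoped MatrixOrder

section StandardGaussian

variable {ι : Type*} [Fintype ι]

theorem memLp_dotProduct_pi_gaussianReal (v : ι → ℝ) :
    MemLp (fun u ↦ v ⬝ᵥ u) 2 (Measure.pi fun _ : ι ↦ gaussianReal 0 1) :=
  memLp_finsetSum _ fun i _ ↦
    ((IsGaussian.memLp_two_id (μ := gaussianReal 0 1)).const_mul (v i)).comp_measurePreserving
      (measurePreserving_eval (fun _ : ι ↦ gaussianReal 0 1) i)

theorem integral_dotProduct_pi_gaussianReal (v : ι → ℝ) :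
    ∫ u, v ⬝ᵥ u ∂Measure.pi (fun _ : ι ↦ gaussianReal 0 1) = 0 := by
  simp only [dotProduct]
  rw [integral_finsetSum _ fun i _ ↦ (integrable_eval IsGaussian.integrable_id).const_mul _]
  simp [integral_const_mul, integral_eval]

theorem variance_dotProduct_pi_gaussianReal (v : ι → ℝ) :
    Var[fun u ↦ v ⬝ᵥ u; Measure.pi fun _ : ι ↦ gaussianReal 0 1] = v ⬝ᵥ v := by
  have h := variance_sum_pi (μ := fun _ : ι ↦ gaussianReal 0 1) (X := fun i t ↦ v i * t)
    fun i ↦ IsGaussian.memLp_two_id.const_mul _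
  convert h using 2
  · ext u
    simp [dotProduct]
  · refine Finset.sum_congr rfl fun i _ ↦ ?_
    rw [variance_const_mul, variance_fun_id_gaussianReal]
    simp [sq]

theorem integral_sq_dotProduct_sub_pi_gaussianReal (v : ι → ℝ) (c : ℝ) :
    ∫ u, (v ⬝ᵥ u - c) ^ 2 ∂Measure.pi (fun _ : ι ↦ gaussianReal 0 1) = v ⬝ᵥ v + c ^ 2 := by
  have hv := memLp_dotProduct_pi_gaussianReal v
  have hvc : MemLp (fun u ↦ v ⬝ᵥ u - c) 2 (Measure.pi fun _ : ι ↦ gaussianReal 0 1) :=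
    hv.sub (memLp_const c)
  have hvar := variance_eq_sub hvc
  rw [variance_sub_const hv.aestronglyMeasurable, variance_dotProduct_pi_gaussianReal,
    integral_sub (hv.integrable one_le_two) (integrable_const c),
    integral_dotProduct_pi_gaussianReal] at hvar
  simp only [integral_const, probReal_univ, smul_eq_mul, one_mul, Pi.pow_apply] at hvar
  linarith

theorem integral_sum_sq_mulVec_sub_pi_gaussianReal {m : Type*} [Fintype m] (M : Matrix m ι ℝ)
    (b : m → ℝ) :
    ∫ u, ∑ i, ((M *ᵥ u) i - b i) ^ 2 ∂Measure.pi (fun _ : ι ↦ gaussianReal 0 1) =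
      (M * Mᵀ).trace + ∑ i, b i ^ 2 := by
  have hint (i : m) : Integrable (fun u ↦ ((M *ᵥ u) i - b i) ^ 2)
      (Measure.pi fun _ : ι ↦ gaussianReal 0 1) :=
    ((memLp_dotProduct_pi_gaussianReal (M i)).sub (memLp_const (b i))).integrable_sq
  have hrow (i : m) :
      ∫ u, ((M *ᵥ u) i - b i) ^ 2 ∂Measure.pi (fun _ : ι ↦ gaussianReal 0 1) =
        M i ⬝ᵥ M i + b i ^ 2 :=
    integral_sq_dotProduct_sub_pi_gaussianReal (M i) (b i)
  rw [integral_finsetSum _ fun i _ ↦ hint i, Finset.sum_congr rfl fun i _ ↦ hrow i,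
    Finset.sum_add_distrib]
  simp [trace, mul_apply, dotProduct]

theorem MeasureTheory.Measure.pi_withDensity_ofReal {α : ι → Type*}
    [∀ i, MeasurableSpace (α i)] {μ : ∀ i, Measure (α i)} [∀ i, SigmaFinite (μ i)]
    {f : ∀ i, α i → ℝ} (hf : ∀ i, Integrable (f i) (μ i)) (hf_nonneg : ∀ i x, 0 ≤ f i x) :
    Measure.pi (fun i ↦ (μ i).withDensity fun x ↦ ENNReal.ofReal (f i x)) =
      (Measure.pi μ).withDensity fun x ↦ ENNReal.ofReal (∏ i, f i (x i)) := by
  have := fun i ↦ isFiniteMeasure_withDensity_ofReal (hf i).2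
  refine Measure.pi_eq fun s hs ↦ ?_
  have hint : Integrable (fun x ↦ ∏ i, f i (x i)) (Measure.pi fun i ↦ (μ i).restrict (s i)) :=
    Integrable.fintype_prod_dep fun i ↦ (hf i).restrict
  rw [withDensity_apply _ (MeasurableSet.univ_pi hs), Measure.restrict_pi_pi,
    ← ofReal_integral_eq_lintegral_ofReal hint
      (ae_of_all _ fun x ↦ Finset.prod_nonneg fun i _ ↦ hf_nonneg i (x i)),
    integral_fintype_prod_eq_prod,
    ENNReal.ofReal_prod_of_nonneg fun i _ ↦ integral_nonneg (hf_nonneg i)]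
  refine Finset.prod_congr rfl fun i _ ↦ ?_
  rw [withDensity_apply _ (hs i),
    ofReal_integral_eq_lintegral_ofReal (hf i).restrict (ae_of_all _ (hf_nonneg i))]

theorem pi_gaussianReal_eq_withDensity :
    Measure.pi (fun _ : ι ↦ gaussianReal 0 1) =
      volume.withDensity fun u ↦ ENNReal.ofReal (∏ i, gaussianPDFReal 0 1 (u i)) := by
  simp_rw [gaussianReal_of_var_ne_zero 0 one_ne_zero, gaussianPDF_def, volume_pi]
  exact Measure.pi_withDensity_ofReal (fun _ ↦ integrable_gaussianPDFReal 0 1)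
    fun _ ↦ gaussianPDFReal_nonneg 0 1

theorem integral_pi_gaussianReal_eq_integral_smul {E : Type*} [NormedAddCommGroup E]
    [NormedSpace ℝ E] (f : (ι → ℝ) → E) :
    ∫ u, f u ∂Measure.pi (fun _ : ι ↦ gaussianReal 0 1) =
      ∫ u, (∏ i, gaussianPDFReal 0 1 (u i)) • f u := by
  rw [pi_gaussianReal_eq_withDensity, integral_withDensity_eq_integral_toReal_smul (by fun_prop)
    (ae_of_all _ fun _ ↦ ENNReal.ofReal_lt_top)]
  simp_rw [ENNReal.toReal_ofReal (Finset.prod_nonneg fun i _ ↦ gaussianPDFReal_nonneg 0 1 _)]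

theorem prod_gaussianPDFReal_zero_one (u : ι → ℝ) :
    ∏ i, gaussianPDFReal 0 1 (u i) =
      (2 * π) ^ (-(Fintype.card ι : ℝ) / 2) * exp (-(1 / 2) * (u ⬝ᵥ u)) := by
  simp only [gaussianPDFReal, Finset.prod_mul_distrib, ← Real.exp_sum, Finset.prod_const,
    NNReal.coe_one, mul_one, sub_zero, Finset.card_univ]
  congr 1
  · rw [Real.sqrt_eq_rpow, ← Real.rpow_neg_one, ← Real.rpow_mul (by positivity),
      ← Real.rpow_natCast, ← Real.rpow_mul (by positivity)]
    ring_nf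
  · simp only [dotProduct, Finset.mul_sum]
    exact congrArg exp (Finset.sum_congr rfl fun i _ ↦ by ring)

end StandardGaussian

theorem Matrix.mulVec_dotProduct_mulVec_mulVec {ι R : Type*} [Fintype ι] [CommSemiring R]
    (S Φ : Matrix ι ι R) (u : ι → R) :
    (S *ᵥ u) ⬝ᵥ (Φ *ᵥ (S *ᵥ u)) = u ⬝ᵥ ((Sᵀ * Φ * S) *ᵥ u) := by
  rw [dotProduct_mulVec, dotProduct_mulVec, dotProduct_mulVec u, ← vecMul_transpose,
    vecMul_vecMul, vecMul_vecMul, Matrix.mul_assoc]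

section Whitening

variable {ι : Type*} [Fintype ι] [DecidableEq ι]

theorem integral_comp_mulVec {E : Type*} [NormedAddCommGroup E] [NormedSpace ℝ E]
    {S : Matrix ι ι ℝ} (hS : S.det ≠ 0) (g : (ι → ℝ) → E) :
    ∫ u, g (S *ᵥ u) = |S.det|⁻¹ • ∫ y, g y := by
  let e := (toLin' S).equivOfDetNeZero (by rwa [LinearMap.det_toLin'])
  have h := e.toContinuousLinearEquiv.toHomeomorph.measurableEmbedding.integral_map
    (μ := volume) g
  change ∫ y, g y ∂(Measure.map (toLin' S) volume) = ∫ u, g (S *ᵥ u) at h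
  rw [← h, Real.map_matrix_volume_pi_eq_smul_volume_pi hS, integral_smul_measure,
    ENNReal.toReal_ofReal (abs_nonneg _), abs_inv]

theorem Matrix.PosDef.exists_transpose_mul_mul_eq_one {Φ : Matrix ι ι ℝ} (hΦ : Φ.PosDef) :
    ∃ S : Matrix ι ι ℝ, Sᵀ * Φ * S = 1 := by
  obtain ⟨B, rfl⟩ := CStarAlgebra.nonneg_iff_eq_star_mul_self.mp hΦ.posSemidef.nonneg
  have hB : IsUnit B.det := by
    refine isUnit_iff_ne_zero.mpr fun h ↦ hΦ.det_pos.ne' ?_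
    rw [det_mul, h, mul_zero]
  refine ⟨B⁻¹, ?_⟩
  rw [star_eq_conjTranspose, conjTranspose_eq_transpose_of_trivial, ← Matrix.mul_assoc,
    ← transpose_mul, mul_nonsing_inv _ hB, transpose_one, Matrix.one_mul, mul_nonsing_inv _ hB]

theorem Matrix.mul_transpose_eq_inv_of_transpose_mul_mul_eq_one {K : Type*} [Field K]
    {Φ S : Matrix ι ι K} (h : Sᵀ * Φ * S = 1) : S * Sᵀ = Φ⁻¹ := by
  rw [Matrix.mul_assoc, mul_eq_one_comm, Matrix.mul_assoc] at h
  exact (inv_eq_right_inv h).symm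

theorem Matrix.trace_sub_mul_inv_mul_transpose_sub {K : Type*} [Field K] {P Q : Matrix ι ι K}
    (hP : P.IsSymm) (hQ : Q.IsSymm) (hPdet : P.det ≠ 0) :
    ((P - Q) * P⁻¹ * (P - Q)ᵀ).trace = (P - 2 • Q + P⁻¹ * Q ^ 2).trace := by
  have hPinv : P * P⁻¹ = 1 := mul_nonsing_inv P hPdet.isUnit
  have hinvP : P⁻¹ * P = 1 := nonsing_inv_mul P hPdet.isUnit
  rw [transpose_sub, hP.eq, hQ.eq]
  calc ((P - Q) * P⁻¹ * (P - Q)).trace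
      = (P * P⁻¹ * P - P * P⁻¹ * Q - Q * (P⁻¹ * P) + Q * P⁻¹ * Q).trace := by noncomm_ring
    _ = (P - 2 • Q).trace + (Q * (P⁻¹ * Q)).trace := by
        rw [hPinv, hinvP, Matrix.one_mul, Matrix.one_mul, Matrix.mul_one, Matrix.mul_assoc Q,
          two_smul, trace_add, sub_add_eq_sub_sub]
    _ = (P - 2 • Q + P⁻¹ * Q ^ 2).trace := by
        rw [trace_mul_comm Q, Matrix.mul_assoc, ← sq, trace_add]

-- The density of `N(μ, Φ⁻¹)`, parametrised by its precision matrix `Φ`.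
noncomputable def gaussianPDFPrecision (μ : ι → ℝ) (Φ : Matrix ι ι ℝ) (x : ι → ℝ) : ℝ :=
  (2 * π) ^ (-(Fintype.card ι : ℝ) / 2) * √Φ.det * exp (-(1 / 2) * ((x - μ) ⬝ᵥ (Φ *ᵥ (x - μ))))

theorem integral_mul_gaussianPDFPrecision {Φ S : Matrix ι ι ℝ} (hS : Sᵀ * Φ * S = 1)
    (μ : ι → ℝ) (f : (ι → ℝ) → ℝ) :
    ∫ x, f x * gaussianPDFPrecision μ Φ x =
      ∫ u, f (μ + S *ᵥ u) ∂Measure.pi (fun _ : ι ↦ gaussianReal 0 1) := by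
  have hdet : Φ.det * S.det ^ 2 = 1 := by
    have := congrArg det hS
    rw [det_mul, det_mul, det_transpose, det_one] at this
    linear_combination this
  have hSdet : S.det ≠ 0 := by
    rintro h
    simp [h] at hdet
  have hΦdet : 0 < Φ.det := by nlinarith [sq_pos_of_ne_zero hSdet]
  have hsqrt : √Φ.det * |S.det| = 1 := by
    rw [← Real.sqrt_sq_eq_abs, ← Real.sqrt_mul hΦdet.le, hdet, Real.sqrt_one]
  have hpdf (u : ι → ℝ) :
      gaussianPDFPrecision μ Φ (μ + S *ᵥ u) = √Φ.det * ∏ i, gaussianPDFReal 0 1 (u i) := by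
    rw [gaussianPDFPrecision, prod_gaussianPDFReal_zero_one, add_sub_cancel_left,
      mulVec_dotProduct_mulVec_mulVec, hS, one_mulVec]
    ring
  calc ∫ x, f x * gaussianPDFPrecision μ Φ x
      = ∫ y, f (μ + y) * gaussianPDFPrecision μ Φ (μ + y) :=
        (integral_add_left_eq_self (fun x ↦ f x * gaussianPDFPrecision μ Φ x) μ).symm
    _ = |S.det| • ∫ u, f (μ + S *ᵥ u) * gaussianPDFPrecision μ Φ (μ + S *ᵥ u) := by
        rw [integral_comp_mulVec hSdet fun y ↦ f (μ + y) * gaussianPDFPrecision μ Φ (μ + y),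
          smul_smul, mul_inv_cancel₀ (abs_ne_zero.2 hSdet), one_smul]
    _ = ∫ u, (∏ i, gaussianPDFReal 0 1 (u i)) • f (μ + S *ᵥ u) := by
        simp_rw [hpdf, smul_eq_mul, ← integral_const_mul]
        congr 1
        ext u
        linear_combination (f (μ + S *ᵥ u) * ∏ i, gaussianPDFReal 0 1 (u i)) * hsqrt
    _ = ∫ u, f (μ + S *ᵥ u) ∂Measure.pi (fun _ : ι ↦ gaussianReal 0 1) :=
        (integral_pi_gaussianReal_eq_integral_smul _).symm

end Whitening

/-- The Hyvärinen discrepancy between two multivariate normals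
`P = N_k(μ_P, Φ_P⁻¹)` and `Q = N_k(μ_Q, Φ_Q⁻¹)`:
`∫ ‖∇ log p − ∇ log q‖² p dx = tr(Φ_P − 2Φ_Q + Φ_P⁻¹Φ_Q²) + ‖Φ_Q(μ_P − μ_Q)‖²`. -/
theorem hyvarinen_discrepancy_mvn {k : ℕ} (μP μQ : Fin k → ℝ)
    (ΦP ΦQ : Matrix (Fin k) (Fin k) ℝ) (hP : ΦP.PosDef) (hQ : ΦQ.PosDef)
    (p : (Fin k → ℝ) → ℝ)
    (hp : ∀ x, p x = (2 * Real.pi) ^ (-(k : ℝ) / 2) * Real.sqrt ΦP.det *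
      Real.exp (-(1/2) * dotProduct (x - μP) (ΦP.mulVec (x - μP)))) :
    (∫ x : Fin k → ℝ,
        (∑ i, ((-(ΦP.mulVec (x - μP) i)) - (-(ΦQ.mulVec (x - μQ) i))) ^ 2) * p x)
      = (ΦP - 2 • ΦQ + ΦP⁻¹ * ΦQ ^ 2).trace
        + ∑ i, (ΦQ.mulVec (μP - μQ) i) ^ 2 := by
  obtain ⟨S, hS⟩ := hP.exists_transpose_mul_mul_eq_one
  have hp_eq : p = gaussianPDFPrecision μP ΦP := by
    ext x
    rw [hp, gaussianPDFPrecision, Fintype.card_fin]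
  have hscore (u : Fin k → ℝ) :
      ∑ i, (-(ΦP *ᵥ (μP + S *ᵥ u - μP)) i - -(ΦQ *ᵥ (μP + S *ᵥ u - μQ)) i) ^ 2 =
        ∑ i, ((((ΦP - ΦQ) * S) *ᵥ u) i - (ΦQ *ᵥ (μP - μQ)) i) ^ 2 := by
    refine Finset.sum_congr rfl fun i _ ↦ ?_
    rw [add_sub_cancel_left, add_sub_right_comm, mulVec_add, ← mulVec_mulVec, sub_mulVec]
    simp only [Pi.add_apply, Pi.sub_apply]
    ring
  rw [hp_eq, integral_mul_gaussianPDFPrecision hS, integral_congr_ae (ae_of_all _ hscore),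
    integral_sum_sq_mulVec_sub_pi_gaussianReal, transpose_mul, Matrix.mul_assoc,
    ← Matrix.mul_assoc S, mul_transpose_eq_inv_of_transpose_mul_mul_eq_one hS, ← Matrix.mul_assoc,
    trace_sub_mul_inv_mul_transpose_sub (isHermitian_iff_isSymm.mp hP.1)
      (isHermitian_iff_isSymm.mp hQ.1) hP.det_pos.ne']
end

section
/- For univariate normals P = N(μ_P, σ_P²) and Q = N(μ_Q, σ_Q²), the Hyvärinen discrepancy satisfies D_H(P,Q) ≥ (2/σ_Q²)·KL(P,Q), where KL(P,Q) = ½{σ_P²/σ_Q² + log(σ_Q²/σ_P²) + (μ_P − μ_Q)²/σ_Q² − 1} is the Kullback–Leibler divergence. -/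
/-!
Both scores are affine in `x`, so `D_H(P, Q)` is the second moment of an affine function of
`X ~ P`, namely `(1/σ_Q² − 1/σ_P²)² σ_P² + (μ_P − μ_Q)²/σ_Q⁴`. Compared with the closed form of
`KL(P, Q)`, the difference is `log(σ_Q²/σ_P²) ≤ σ_Q²/σ_P² − 1`.
-/

open Real MeasureTheory ProbabilityTheory

lemma integral_sq_affine_gaussianReal (μ : ℝ) (v : NNReal) (a b : ℝ) :
    ∫ x, (a * x + b) ^ 2 ∂gaussianReal μ v = a ^ 2 * v + (a * μ + b) ^ 2 := by
  have hid : MemLp id 2 (gaussianReal μ v) := memLp_id_gaussianReal 2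
  have hY : MemLp (fun x ↦ a * x + b) 2 (gaussianReal μ v) :=
    (hid.const_mul a).add (memLp_const b)
  have hmean : ∫ x, (a * x + b) ∂gaussianReal μ v = a * μ + b := by
    have hint : Integrable (fun x ↦ x) (gaussianReal μ v) := hid.integrable one_le_two
    rw [integral_add (hint.const_mul a) (integrable_const b), integral_const_mul,
      integral_id_gaussianReal]
    simp
  have hvar : Var[fun x ↦ a * x + b; gaussianReal μ v] = a ^ 2 * v := by
    rw [variance_add_const (by fun_prop), variance_const_mul, variance_fun_id_gaussianReal]
  have hvar_eq := variance_eq_sub hY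
  simp only [Pi.pow_apply, hmean] at hvar_eq
  linarith

lemma gaussian_kl_closed_form_le {s t : ℝ} (hs : 0 < s) (ht : 0 < t) (d : ℝ) :
    (2 / t) * ((1 / 2) * (s / t + log (t / s) + d ^ 2 / t - 1))
      ≤ (1 / t - 1 / s) ^ 2 * s + (d / t) ^ 2 := by
  have hlog : log (t / s) ≤ t / s - 1 := log_le_sub_one_of_pos (by positivity)
  calc (2 / t) * ((1 / 2) * (s / t + log (t / s) + d ^ 2 / t - 1))
      ≤ (2 / t) * ((1 / 2) * (s / t + (t / s - 1) + d ^ 2 / t - 1)) := by gcongr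
    _ = (1 / t - 1 / s) ^ 2 * s + (d / t) ^ 2 := by field_simp; ring

/-- For univariate normals `P = N(μ_P,σ_P²)`, `Q = N(μ_Q,σ_Q²)`, the Hyvärinen
discrepancy dominates `(2/σ_Q²)` times the Kullback–Leibler divergence
`KL(P,Q) = ½{σ_P²/σ_Q² + log(σ_Q²/σ_P²) + (μ_P−μ_Q)²/σ_Q² − 1}`. -/
theorem hyvarinen_ge_kl_univariate (μP μQ σP σQ : ℝ)
    (hσP : 0 < σP) (hσQ : 0 < σQ) (p : ℝ → ℝ)
    (hp : ∀ x, p x = (Real.sqrt (2 * Real.pi * σP ^ 2))⁻¹ *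
        Real.exp (-(x - μP) ^ 2 / (2 * σP ^ 2))) :
    (∫ x : ℝ, ((-(x - μP) / σP ^ 2) - (-(x - μQ) / σQ ^ 2)) ^ 2 * p x)
      ≥ (2 / σQ ^ 2) *
        ((1 / 2) * (σP ^ 2 / σQ ^ 2 + Real.log (σQ ^ 2 / σP ^ 2)
          + (μP - μQ) ^ 2 / σQ ^ 2 - 1)) := by
  set v : NNReal := ⟨σP ^ 2, sq_nonneg σP⟩
  have hv_coe : (v : ℝ) = σP ^ 2 := rfl
  have hv : v ≠ 0 := by rw [← NNReal.coe_ne_zero, hv_coe]; positivity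
  have hp_pdf : p = gaussianPDFReal μP v := funext hp
  have hscore (x : ℝ) : (-(x - μP) / σP ^ 2) - (-(x - μQ) / σQ ^ 2)
      = (1 / σQ ^ 2 - 1 / σP ^ 2) * x + (μP / σP ^ 2 - μQ / σQ ^ 2) := by ring
  have hintegral : ∫ x : ℝ, ((-(x - μP) / σP ^ 2) - (-(x - μQ) / σQ ^ 2)) ^ 2 * p x
      = (1 / σQ ^ 2 - 1 / σP ^ 2) ^ 2 * σP ^ 2 + ((μP - μQ) / σQ ^ 2) ^ 2 := by
    simp_rw [hp_pdf, mul_comm _ (gaussianPDFReal μP v _), ← smul_eq_mul,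
      ← integral_gaussianReal_eq_integral_smul hv, smul_eq_mul, hscore,
      integral_sq_affine_gaussianReal, hv_coe]
    field_simp
    ring
  rw [hintegral, ge_iff_le]
  exact gaussian_kl_closed_form_le (by positivity) (by positivity) (μP - μQ)
end

section
/- Let l(y) = −(ν/2) log(yᵀΠy) on ℝⁿ (where Π is the residual projection of rank ν = n − p, and yᵀΠy > 0). Writing r = Πy and RSS = yᵀΠy, one has ∂l/∂y_i = −ν r_i/RSS and ∂²l/∂y_i² = ν(2r_i²/RSS² − Π_{ii}/RSS); consequently the Hyvärinen score S_H = 2Δl + ‖∇l‖² equals −ν(ν−4)/RSS = −(ν−4)/σ̂², where σ̂² = RSS/ν. -/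
open Real Matrix

/-! Along the coordinate line `t ↦ update y i t` the quadratic form `zᵀΠz` is the one-variable
quadratic `RSS + 2 (t - yᵢ) rᵢ + (t - yᵢ)² Πᵢᵢ` (as `Πᵀ = Π`), so both partial
derivatives of `l` are derivatives of the logarithm of a quadratic. Summing over `i`, the
score involves only `∑ rᵢ² = rᵀr = yᵀΠy = RSS` (from `Π² = Π`) and `∑ Πᵢᵢ = tr Π = n - p`. -/

/-- Partial derivative of `f : (Fin n → ℝ) → ℝ` in the `i`-th coordinate. -/
noncomputable def pderiv' {n : ℕ} (f : (Fin n → ℝ) → ℝ) (i : Fin n)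
    (x : Fin n → ℝ) : ℝ :=
  deriv (fun t => f (Function.update x i t)) (x i)

namespace Matrix

variable {m k R : Type*} [Fintype m] [Fintype k] [DecidableEq k] [CommRing R]

theorem isSymm_one_sub_mul_inv_mul_transpose [DecidableEq m] (X : Matrix m k R) :
    (1 - X * (Xᵀ * X)⁻¹ * Xᵀ).IsSymm := by
  simp [IsSymm, transpose_nonsing_inv, Matrix.mul_assoc]

theorem isIdempotentElem_mul_inv_mul_transpose {X : Matrix m k R} (hX : IsUnit (Xᵀ * X).det) :
    IsIdempotentElem (X * (Xᵀ * X)⁻¹ * Xᵀ) :=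
  calc X * (Xᵀ * X)⁻¹ * Xᵀ * (X * (Xᵀ * X)⁻¹ * Xᵀ)
      = X * ((Xᵀ * X)⁻¹ * (Xᵀ * X)) * (Xᵀ * X)⁻¹ * Xᵀ := by
        simp only [Matrix.mul_assoc]
    _ = X * (Xᵀ * X)⁻¹ * Xᵀ := by rw [nonsing_inv_mul _ hX, Matrix.mul_one]

theorem trace_one_sub_mul_inv_mul_transpose [DecidableEq m] {X : Matrix m k R}
    (hX : IsUnit (Xᵀ * X).det) :
    trace (1 - X * (Xᵀ * X)⁻¹ * Xᵀ) = (Fintype.card m : R) - Fintype.card k := by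
  rw [trace_sub, trace_one, Matrix.mul_assoc, trace_mul_comm, Matrix.mul_assoc,
    nonsing_inv_mul _ hX, trace_one]

theorem sum_sq_mulVec_of_isSymm_of_isIdempotentElem {P : Matrix m m R} (hP : P.IsSymm)
    (hPP : IsIdempotentElem P) (y : m → R) : ∑ i, (P *ᵥ y) i ^ 2 = y ⬝ᵥ P *ᵥ y := by
  calc ∑ i, (P *ᵥ y) i ^ 2 = P *ᵥ y ⬝ᵥ P *ᵥ y := by simp only [dotProduct, sq]
    _ = y ⬝ᵥ P *ᵥ y := by
      rw [dotProduct_mulVec, ← mulVec_transpose, hP.eq, mulVec_mulVec, hPP.eq, dotProduct_comm]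

theorem dotProduct_mulVec_update_of_isSymm [DecidableEq m] {P : Matrix m m R} (hP : P.IsSymm)
    (y : m → R) (i : m) (t : R) :
    Function.update y i t ⬝ᵥ P *ᵥ Function.update y i t
      = y ⬝ᵥ P *ᵥ y + 2 * (t - y i) * (P *ᵥ y) i + (t - y i) ^ 2 * P i i := by
  set s := t - y i
  have hupd : Function.update y i t = y + Pi.single i s := by
    rw [Pi.update_eq_sub_add_single, Pi.single_sub]; abel
  have hleft : y ⬝ᵥ P *ᵥ Pi.single i s = s * (P *ᵥ y) i := by
    rw [dotProduct_mulVec, ← mulVec_transpose, hP.eq, dotProduct_single, mul_comm]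
  have hright : Pi.single i s ⬝ᵥ P *ᵥ y = s * (P *ᵥ y) i := single_dotProduct _ _ _
  have hdiag : Pi.single i s ⬝ᵥ P *ᵥ Pi.single i s = s ^ 2 * P i i := by
    rw [single_dotProduct, mulVec_single]
    simp only [Pi.smul_apply, col_apply, MulOpposite.smul_eq_mul_unop, MulOpposite.unop_op]
    ring
  rw [hupd]
  simp only [mulVec_add, dotProduct_add, add_dotProduct, hleft, hright, hdiag]
  ring

end Matrix

theorem pderiv'_pderiv'_self {n : ℕ} (f : (Fin n → ℝ) → ℝ) (i : Fin n) (x : Fin n → ℝ) :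
    pderiv' (pderiv' f i) i x = deriv (deriv fun t => f (Function.update x i t)) (x i) := by
  simp only [pderiv', Function.update_self, Function.update_idem]

theorem deriv_deriv_log_comp {Q Q' : ℝ → ℝ} {Q'' a : ℝ}
    (hQ : ∀ᶠ t in nhds a, HasDerivAt Q (Q' t) t) (hQ' : HasDerivAt Q' Q'' a) (ha : 0 < Q a) :
    deriv (deriv fun t => log (Q t)) a = (Q'' * Q a - Q' a ^ 2) / Q a ^ 2 := by
  have hpos : ∀ᶠ t in nhds a, 0 < Q t :=
    hQ.self_of_nhds.continuousAt.eventually (eventually_gt_nhds ha)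
  have hlog : (deriv fun t => log (Q t)) =ᶠ[nhds a] fun t => Q' t / Q t := by
    filter_upwards [hQ, hpos] with t hQt ht
    exact (hQt.log ht.ne').deriv
  rw [hlog.deriv_eq]
  exact (hQ'.div hQ.self_of_nhds ha.ne').deriv.trans (by ring)

section QuadraticForm

variable {n : ℕ} {P : Matrix (Fin n) (Fin n) ℝ}

theorem hasDerivAt_dotProduct_mulVec_update (hP : P.IsSymm) (y : Fin n → ℝ) (i : Fin n)
    (t : ℝ) :
    HasDerivAt (fun s => Function.update y i s ⬝ᵥ P *ᵥ Function.update y i s)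
      (2 * (P *ᵥ y) i + 2 * (t - y i) * P i i) t := by
  simp only [dotProduct_mulVec_update_of_isSymm hP]
  have hs : HasDerivAt (fun s => s - y i) 1 t := (hasDerivAt_id t).sub_const _
  exact ((((hs.const_mul 2).mul_const ((P *ᵥ y) i)).const_add (y ⬝ᵥ P *ᵥ y)).add
    ((hs.pow 2).mul_const (P i i))).congr_deriv (by push_cast; ring)

theorem pderiv'_const_mul_log_dotProduct_mulVec (hP : P.IsSymm) (k : ℝ) {y : Fin n → ℝ}
    (hy : 0 < y ⬝ᵥ P *ᵥ y) (i : Fin n) :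
    pderiv' (fun z => k * log (z ⬝ᵥ P *ᵥ z)) i y
      = k * (2 * (P *ᵥ y) i / (y ⬝ᵥ P *ᵥ y)) := by
  have hQ := hasDerivAt_dotProduct_mulVec_update hP y i (y i)
  simp only [pderiv', deriv_const_mul_field']
  rw [(hQ.log (by simpa using hy.ne')).deriv]
  simp only [Function.update_eq_self, sub_self, mul_zero, zero_mul, add_zero]

theorem pderiv'_pderiv'_const_mul_log_dotProduct_mulVec (hP : P.IsSymm) (k : ℝ)
    {y : Fin n → ℝ} (hy : 0 < y ⬝ᵥ P *ᵥ y) (i : Fin n) :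
    pderiv' (pderiv' (fun z => k * log (z ⬝ᵥ P *ᵥ z)) i) i y
      = k * ((2 * P i i * (y ⬝ᵥ P *ᵥ y) - (2 * (P *ᵥ y) i) ^ 2) / (y ⬝ᵥ P *ᵥ y) ^ 2) := by
  have hQ' : HasDerivAt (fun t => 2 * (P *ᵥ y) i + 2 * (t - y i) * P i i) (2 * P i i) (y i) :=
    ((((hasDerivAt_id (y i)).sub_const (y i)).const_mul 2).mul_const (P i i)).const_add
      (2 * (P *ᵥ y) i) |>.congr_deriv (by ring)
  simp only [pderiv'_pderiv'_self, deriv_const_mul_field']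
  rw [deriv_deriv_log_comp (.of_forall (hasDerivAt_dotProduct_mulVec_update hP y i)) hQ']
  · simp only [Function.update_eq_self, sub_self]
    ring
  · simpa using hy

end QuadraticForm

theorem hyvarinen_score_unknown_variance_general {n p : ℕ}
    (X : Matrix (Fin n) (Fin p) ℝ)
    (hinv : IsUnit (Xᵀ * X).det)
    (Pr : Matrix (Fin n) (Fin n) ℝ) (hPr : Pr = 1 - X * (Xᵀ * X)⁻¹ * Xᵀ)
    (l : (Fin n → ℝ) → ℝ)
    (hl : ∀ z, l z = -(((n : ℝ) - (p : ℝ)) / 2) *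
        Real.log (dotProduct z (Pr.mulVec z)))
    (y : Fin n → ℝ) (hRSS : 0 < dotProduct y (Pr.mulVec y)) :
    (∀ i, pderiv' l i y
        = -((n : ℝ) - (p : ℝ)) * (Pr.mulVec y i) /
            dotProduct y (Pr.mulVec y)) ∧
    (∀ i, pderiv' (pderiv' l i) i y
        = ((n : ℝ) - (p : ℝ)) *
            (2 * (Pr.mulVec y i) ^ 2 / (dotProduct y (Pr.mulVec y)) ^ 2
              - Pr i i / dotProduct y (Pr.mulVec y))) ∧
    2 * (∑ i, pderiv' (pderiv' l i) i y) + ∑ i, (pderiv' l i y) ^ 2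
      = -(((n : ℝ) - (p : ℝ)) * (((n : ℝ) - (p : ℝ)) - 4)) /
          dotProduct y (Pr.mulVec y) := by
  set ν : ℝ := n - p
  set RSS := y ⬝ᵥ Pr *ᵥ y with hRSS_def
  have hsymm : Pr.IsSymm := hPr ▸ isSymm_one_sub_mul_inv_mul_transpose X
  have hl' : l = fun z => -(ν / 2) * log (z ⬝ᵥ Pr *ᵥ z) := funext hl
  have grad (i : Fin n) : pderiv' l i y = -ν * (Pr *ᵥ y) i / RSS := by
    rw [hl', pderiv'_const_mul_log_dotProduct_mulVec hsymm _ hRSS, ← hRSS_def]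
    ring
  have hess (i : Fin n) :
      pderiv' (pderiv' l i) i y = ν * (2 * (Pr *ᵥ y) i ^ 2 / RSS ^ 2 - Pr i i / RSS) := by
    rw [hl', pderiv'_pderiv'_const_mul_log_dotProduct_mulVec hsymm _ hRSS, ← hRSS_def]
    field_simp
    ring
  refine ⟨grad, hess, ?_⟩
  have hRSS_eq : ∑ i, (Pr *ᵥ y) i ^ 2 = RSS :=
    sum_sq_mulVec_of_isSymm_of_isIdempotentElem hsymm
      (hPr ▸ (isIdempotentElem_mul_inv_mul_transpose hinv).one_sub) y
  have htrace : ∑ i, Pr i i = ν := by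
    have := trace_one_sub_mul_inv_mul_transpose hinv
    rwa [← hPr, Fintype.card_fin, Fintype.card_fin] at this
  simp only [grad, hess, div_pow, mul_pow, ← Finset.sum_div, ← Finset.mul_sum,
    Finset.sum_sub_distrib, hRSS_eq, htrace]
  field_simp
  ring

/-- For `l(y) = −(ν/2) log(yᵀΠy)` with `Π` the residual projection of rank
`ν = n − p`: writing `r = Πy`, `RSS = yᵀΠy > 0`, one has
`∂l/∂yᵢ = −ν rᵢ/RSS`, `∂²l/∂yᵢ² = ν(2rᵢ²/RSS² − Πᵢᵢ/RSS)`, and the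
Hyvärinen score `2Δl + ‖∇l‖²` equals `−ν(ν−4)/RSS = −(ν−4)/σ̂²` with
`σ̂² = RSS/ν`. -/
theorem hyvarinen_score_unknown_variance {n p : ℕ} (hpn : p ≤ n)
    (X : Matrix (Fin n) (Fin p) ℝ) (hrank : X.rank = p)
    (hinv : IsUnit (Xᵀ * X).det)
    (Pr : Matrix (Fin n) (Fin n) ℝ) (hPr : Pr = 1 - X * (Xᵀ * X)⁻¹ * Xᵀ)
    (l : (Fin n → ℝ) → ℝ)
    (hl : ∀ z, l z = -(((n : ℝ) - (p : ℝ)) / 2) *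
        Real.log (dotProduct z (Pr.mulVec z)))
    (y : Fin n → ℝ) (hRSS : 0 < dotProduct y (Pr.mulVec y)) :
    (∀ i, pderiv' l i y
        = -((n : ℝ) - (p : ℝ)) * (Pr.mulVec y i) /
            dotProduct y (Pr.mulVec y)) ∧
    (∀ i, pderiv' (pderiv' l i) i y
        = ((n : ℝ) - (p : ℝ)) *
            (2 * (Pr.mulVec y i) ^ 2 / (dotProduct y (Pr.mulVec y)) ^ 2
              - Pr i i / dotProduct y (Pr.mulVec y))) ∧
    2 * (∑ i, pderiv' (pderiv' l i) i y) + ∑ i, (pderiv' l i y) ^ 2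
      = -(((n : ℝ) - (p : ℝ)) * (((n : ℝ) - (p : ℝ)) - 4)) /
          dotProduct y (Pr.mulVec y) :=
  hyvarinen_score_unknown_variance_general X hinv Pr hPr l hl y hRSS
end

section
/- Let Z₁, Z₂, … be i.i.d. N(0,σ²), Uᵢ = Zᵢ²/σ² − 1, Ū_i the running mean. For i < j, Cov(Ū_i², Ū_j²) = (i/j)² Var(Ū_i²), and Var(Ū_i²) = 8/i² + 48/i³. Consequently Var(Σ_{i=1}^n Ū_i²) = O(log n). -/
open MeasureTheory ProbabilityTheory Finset
open scoped NNReal ENNReal Nat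

/-!
Write `S_i = U_1 + ⋯ + U_i`, so that `Ū_i = S_i / i`. For `i ≤ j` the increment `S_j - S_i` is
independent of `S_i` and centred, so expanding `S_j² = (S_i + (S_j - S_i))²` leaves only
`Cov(S_i², S_j²) = Var(S_i²)`; dividing by `i² j²` gives the covariance identity. For independent
centred summands `E(S + U)⁴ = E S⁴ + 6 E S² E U² + E U⁴`, which yields
`Var(S_i²) = 2 i² (E U²)² + i (E U⁴ - 3 (E U²)²)`, and the Gaussian moments
`E Z^{2m} = (2m - 1)‼ σ^{2m}` (integration by parts) give `E U² = 2`, `E U⁴ = 60`.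
Finally `Cov(Ū_i², Ū_j²) ≤ 56 / max(i, j)²`, and `∑_{i, j ≤ n} max(i, j)⁻² ≤ 3 H_n = O(log n)`.
-/

namespace MeasureTheory

variable {Ω : Type*} [MeasurableSpace Ω] {μ : Measure Ω} {X : Ω → ℝ}

lemma MemLp.integrable_pow_of_le [IsFiniteMeasure μ] {n m : ℕ} (hX : MemLp X n μ)
    (hm : m ≤ n) :
    Integrable (fun ω => X ω ^ m) μ :=
  (hX.mono_exponent (by exact_mod_cast hm)).integrable_norm_pow'.mono'
    (hX.aestronglyMeasurable.pow m) (.of_forall fun ω => by simp [norm_pow])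

lemma MemLp.sq_of_four (hX : MemLp X 4 μ) : MemLp (fun ω => X ω ^ 2) 2 μ := by
  refine (memLp_two_iff_integrable_sq (hX.aestronglyMeasurable.pow 2)).mpr ?_
  refine (hX.integrable_norm_pow (p := 4) four_ne_zero).congr (.of_forall fun ω => ?_)
  simp [← pow_mul, (by decide : Even 4).pow_abs]

end MeasureTheory

lemma integrable_pow_mul_exp_neg_mul_sq {b : ℝ} (hb : 0 < b) (n : ℕ) :
    Integrable (fun x : ℝ => x ^ n * Real.exp (-b * x ^ 2)) := by
  simpa [Real.rpow_natCast] using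
    integrable_rpow_mul_exp_neg_mul_sq hb (s := n) (by linarith [n.cast_nonneg (α := ℝ)])

lemma integral_pow_add_two_mul_exp_neg_mul_sq {b : ℝ} (hb : 0 < b) (n : ℕ) :
    ∫ x : ℝ, x ^ (n + 2) * Real.exp (-b * x ^ 2)
      = (n + 1) / (2 * b) * ∫ x : ℝ, x ^ n * Real.exp (-b * x ^ 2) := by
  have hu : ∀ x : ℝ, HasDerivAt (fun x => x ^ (n + 1)) ((n + 1) * x ^ n) x := fun x => by
    simpa using hasDerivAt_pow (n + 1) x
  have hv : ∀ x : ℝ, HasDerivAt (fun x => -(2 * b)⁻¹ * Real.exp (-b * x ^ 2))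
      (x * Real.exp (-b * x ^ 2)) x := fun x => by
    refine (((hasDerivAt_pow 2 x).const_mul (-b)).exp.const_mul (-(2 * b)⁻¹)).congr_deriv ?_
    field_simp
    ring
  have hI := integrable_pow_mul_exp_neg_mul_sq hb
  have ibp := integral_mul_deriv_eq_deriv_mul_of_integrable (fun x _ => hu x) (fun x _ => hv x)
    ((hI (n + 2)).congr (.of_forall fun x => by simp only [Pi.mul_apply]; ring))
    (((hI n).const_mul ((n + 1) * -(2 * b)⁻¹)).congr
      (.of_forall fun x => by simp only [Pi.mul_apply]; ring))
    (((hI (n + 1)).const_mul (-(2 * b)⁻¹)).congr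
      (.of_forall fun x => by simp only [Pi.mul_apply]; ring))
  calc ∫ x : ℝ, x ^ (n + 2) * Real.exp (-b * x ^ 2)
      = ∫ x : ℝ, x ^ (n + 1) * (x * Real.exp (-b * x ^ 2)) := by congr 1 with x; ring
    _ = ∫ x : ℝ, (n + 1) / (2 * b) * (x ^ n * Real.exp (-b * x ^ 2)) := by
        rw [ibp, ← integral_neg]; congr 1 with x; field_simp
    _ = _ := integral_const_mul _ _

lemma sum_Icc_inv_max_sq_le {i : ℕ} (hi : 0 < i) (n : ℕ) :
    ∑ j ∈ Icc 1 n, (((max i j : ℕ) : ℝ) ^ 2)⁻¹ ≤ 3 / i := by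
  have hi' : (0 : ℝ) < i := by exact_mod_cast hi
  have hsub : Icc 1 n ⊆ Icc 1 i ∪ Ioo i (n + 1) := fun j hj => by
    simp only [mem_union, mem_Icc, mem_Ioo] at hj ⊢; omega
  have hdisj : Disjoint (Icc 1 i) (Ioo i (n + 1)) :=
    disjoint_left.mpr fun j hj hj' => by simp only [mem_Icc, mem_Ioo] at hj hj'; omega
  have hlow : ∑ j ∈ Icc 1 i, (((max i j : ℕ) : ℝ) ^ 2)⁻¹ = 1 / i := by
    rw [sum_congr rfl fun j hj => by rw [max_eq_left (mem_Icc.mp hj).2], sum_const,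
      Nat.card_Icc, nsmul_eq_mul]
    field_simp
    simp
  have hhigh : ∑ j ∈ Ioo i (n + 1), (((max i j : ℕ) : ℝ) ^ 2)⁻¹ ≤ 2 / i := by
    rw [sum_congr rfl fun j hj => by rw [max_eq_right (mem_Ioo.mp hj).1.le]]
    refine (sum_Ioo_inv_sq_le i (n + 1)).trans ?_
    gcongr
    linarith
  calc ∑ j ∈ Icc 1 n, (((max i j : ℕ) : ℝ) ^ 2)⁻¹
      ≤ ∑ j ∈ Icc 1 i ∪ Ioo i (n + 1), (((max i j : ℕ) : ℝ) ^ 2)⁻¹ :=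
        sum_le_sum_of_subset_of_nonneg hsub fun _ _ _ => by positivity
    _ ≤ 1 / i + 2 / i := by rw [sum_union hdisj, hlow]; linarith
    _ = 3 / i := by ring

lemma sum_Icc_sum_Icc_inv_max_sq_le_log {n : ℕ} (hn : 2 ≤ n) :
    ∑ i ∈ Icc 1 n, ∑ j ∈ Icc 1 n, (((max i j : ℕ) : ℝ) ^ 2)⁻¹ ≤ 9 * Real.log n := by
  have hlog : 1 / 2 ≤ Real.log n := by
    have := Real.log_two_gt_d9
    have : Real.log 2 ≤ Real.log n := Real.log_le_log (by norm_num) (by exact_mod_cast hn)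
    linarith
  calc ∑ i ∈ Icc 1 n, ∑ j ∈ Icc 1 n, (((max i j : ℕ) : ℝ) ^ 2)⁻¹
      ≤ ∑ i ∈ Icc 1 n, 3 * ((i : ℝ))⁻¹ :=
        sum_le_sum fun i hi =>
          (sum_Icc_inv_max_sq_le (mem_Icc.mp hi).1 n).trans_eq (div_eq_mul_inv _ _)
    _ = 3 * harmonic n := by rw [← mul_sum, harmonic_eq_sum_Icc]; push_cast; rfl
    _ ≤ 3 * (1 + Real.log n) := by gcongr; exact harmonic_le_one_add_log n
    _ ≤ 9 * Real.log n := by linarith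

namespace ProbabilityTheory

lemma integral_pow_add_two_gaussianReal (v : ℝ≥0) (n : ℕ) :
    ∫ x, x ^ (n + 2) ∂gaussianReal 0 v = (n + 1) * v * ∫ x, x ^ n ∂gaussianReal 0 v := by
  rcases eq_or_ne v 0 with rfl | hv
  · simp [gaussianReal_zero_var]
  have hdens : ∀ m : ℕ, ∫ x, x ^ m ∂gaussianReal 0 v
      = (√(2 * Real.pi * v))⁻¹ * ∫ x, x ^ m * Real.exp (-(2 * (v : ℝ))⁻¹ * x ^ 2) :=
      fun m => by
    rw [integral_gaussianReal_eq_integral_smul hv, ← integral_const_mul]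
    congr 1 with x
    simp only [gaussianPDFReal, sub_zero, smul_eq_mul]
    ring_nf
  rw [hdens, hdens, integral_pow_add_two_mul_exp_neg_mul_sq (by positivity)]
  field_simp

lemma integral_pow_two_mul_gaussianReal (v : ℝ≥0) (m : ℕ) :
    ∫ x, x ^ (2 * m) ∂gaussianReal 0 v = (2 * m - 1)‼ * (v : ℝ) ^ m := by
  induction m with
  | zero => simp
  | succ m ih =>
    rw [show 2 * (m + 1) = 2 * m + 2 by ring, integral_pow_add_two_gaussianReal, ih,
      show 2 * m + 2 - 1 = 2 * m + 1 by omega, Nat.doubleFactorial_add_one]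
    push_cast
    ring

lemma memLp_sq_gaussianReal (c : ℝ) (v p : ℝ≥0) :
    MemLp (fun x : ℝ => x ^ 2) p (gaussianReal c v) := by
  have h := (memLp_id_gaussianReal (μ := c) (v := v) (2 * p)).norm_rpow_div 2
  rw [ENNReal.coe_mul, ENNReal.coe_ofNat, mul_comm,
    ENNReal.mul_div_cancel_right two_ne_zero ENNReal.ofNat_ne_top] at h
  simpa using h

lemma integral_sq_sub_one_pow_gaussianReal (k : ℕ) :
    ∫ x, (x ^ 2 - 1) ^ k ∂gaussianReal 0 1
      = ∑ m ∈ range (k + 1), ((2 * m - 1)‼ * (-1) ^ (k - m) * k.choose m : ℝ) := by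
  have hint : ∀ m : ℕ, Integrable (fun x : ℝ => (x ^ 2) ^ m) (gaussianReal 0 1) := fun m =>
    (memLp_sq_gaussianReal 0 1 m).integrable_pow_of_le le_rfl
  simp_rw [sub_eq_add_neg, add_pow]
  rw [integral_finsetSum _ fun m _ => ((hint m).mul_const _).mul_const _]
  refine sum_congr rfl fun m _ => ?_
  rw [integral_mul_const, integral_mul_const]
  simp_rw [← pow_mul]
  rw [integral_pow_two_mul_gaussianReal]
  simp

section StandardGaussian

variable {Ω : Type*} [MeasurableSpace Ω] {μ : Measure Ω} {Y : Ω → ℝ}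

lemma HasLaw.div_of_gaussianReal {Z : Ω → ℝ} {σ : ℝ} (hσ : σ ≠ 0)
    (hZ : HasLaw Z (gaussianReal 0 ⟨σ ^ 2, sq_nonneg σ⟩) μ) :
    HasLaw (fun ω => Z ω / σ) (gaussianReal 0 1) μ := by
  have hv : (⟨σ ^ 2, sq_nonneg σ⟩ : ℝ≥0) ≠ 0 := fun h =>
    pow_ne_zero 2 hσ (congrArg NNReal.toReal h)
  convert gaussianReal_div_const hZ σ using 2
  · rw [zero_div]
  · exact (div_self hv).symm

lemma HasLaw.memLp_sq_sub_one (hY : HasLaw Y (gaussianReal 0 1) μ) (p : ℝ≥0) :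
    MemLp (fun ω => Y ω ^ 2 - 1) p μ := by
  have hg : MemLp (fun x : ℝ => x ^ 2 - 1) p (μ.map Y) := by
    rw [hY.map_eq]
    exact (memLp_sq_gaussianReal 0 1 p).sub (memLp_const 1)
  exact (memLp_map_measure_iff hg.aestronglyMeasurable hY.aemeasurable).mp hg

lemma HasLaw.integral_sq_sub_one_pow (hY : HasLaw Y (gaussianReal 0 1) μ) (k : ℕ) :
    ∫ ω, (Y ω ^ 2 - 1) ^ k ∂μ
      = ∑ m ∈ range (k + 1), ((2 * m - 1)‼ * (-1) ^ (k - m) * k.choose m : ℝ) := by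
  rw [← integral_sq_sub_one_pow_gaussianReal]
  exact hY.integral_comp (f := fun x => (x ^ 2 - 1) ^ k) (by fun_prop)

lemma HasLaw.integral_sq_sub_one (hY : HasLaw Y (gaussianReal 0 1) μ) :
    ∫ ω, Y ω ^ 2 - 1 ∂μ = 0 := by
  simpa [sum_range_succ] using hY.integral_sq_sub_one_pow 1

lemma HasLaw.integral_sq_sub_one_sq (hY : HasLaw Y (gaussianReal 0 1) μ) :
    ∫ ω, (Y ω ^ 2 - 1) ^ 2 ∂μ = 2 := by
  rw [hY.integral_sq_sub_one_pow]
  norm_num [sum_range_succ, Nat.doubleFactorial, Nat.choose]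

lemma HasLaw.integral_sq_sub_one_pow_four (hY : HasLaw Y (gaussianReal 0 1) μ) :
    ∫ ω, (Y ω ^ 2 - 1) ^ 4 ∂μ = 60 := by
  rw [hY.integral_sq_sub_one_pow]
  norm_num [sum_range_succ, Nat.doubleFactorial, Nat.choose]

end StandardGaussian

section Independence

variable {Ω : Type*} [MeasurableSpace Ω] {μ : Measure Ω}

lemma iIndepFun.indepFun_finsetSum_finsetSum {ι : Type*} {f : ι → Ω → ℝ} (h : iIndepFun f μ)
    (hf : ∀ i, AEMeasurable (f i) μ) {S T : Finset ι} (hST : Disjoint S T) :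
    IndepFun (fun ω => ∑ i ∈ S, f i ω) (fun ω => ∑ i ∈ T, f i ω) μ := by
  have hsum : ∀ R : Finset ι,
      (fun ω => ∑ i ∈ R, f i ω) = (fun v : R → ℝ => ∑ i, v i) ∘ fun ω i => f i ω :=
    fun R => funext fun ω => (sum_coe_sort R _).symm
  rw [hsum S, hsum T]
  exact (h.indepFun_finset₀ S T hST hf).comp (by fun_prop) (by fun_prop)

variable {X Y : Ω → ℝ}

lemma IndepFun.integral_add_pow [IsFiniteMeasure μ] (hXY : IndepFun X Y μ) {n : ℕ}
    (hX : MemLp X n μ) (hY : MemLp Y n μ) :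
    ∫ ω, (X ω + Y ω) ^ n ∂μ
      = ∑ m ∈ range (n + 1), (∫ ω, X ω ^ m ∂μ) * (∫ ω, Y ω ^ (n - m) ∂μ) * n.choose m := by
  have hpow : ∀ m k : ℕ, IndepFun (fun ω => X ω ^ m) (fun ω => Y ω ^ k) μ := fun m k =>
    hXY.comp (measurable_id.pow_const m) (measurable_id.pow_const k)
  simp_rw [add_pow]
  rw [integral_finsetSum _ fun m hm => ?_]
  · refine sum_congr rfl fun m _ => ?_
    rw [integral_mul_const, (hpow m (n - m)).integral_fun_mul_eq_mul_integral
      (hX.aestronglyMeasurable.pow m) (hY.aestronglyMeasurable.pow (n - m))]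
  · exact ((hpow m (n - m)).integrable_mul
      (hX.integrable_pow_of_le (Nat.lt_succ_iff.mp (mem_range.mp hm)))
      (hY.integrable_pow_of_le (Nat.sub_le n m))).mul_const _

lemma IndepFun.integral_add_sq [IsProbabilityMeasure μ] (hXY : IndepFun X Y μ)
    (hX : MemLp X 2 μ) (hY : MemLp Y 2 μ) (hY0 : μ[Y] = 0) :
    ∫ ω, (X ω + Y ω) ^ 2 ∂μ = ∫ ω, X ω ^ 2 ∂μ + ∫ ω, Y ω ^ 2 ∂μ := by
  rw [hXY.integral_add_pow hX hY]
  simp [sum_range_succ, hY0, add_comm]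

lemma IndepFun.integral_add_pow_four [IsProbabilityMeasure μ] (hXY : IndepFun X Y μ)
    (hX : MemLp X 4 μ) (hY : MemLp Y 4 μ) (hX0 : μ[X] = 0) (hY0 : μ[Y] = 0) :
    ∫ ω, (X ω + Y ω) ^ 4 ∂μ
      = ∫ ω, X ω ^ 4 ∂μ + 6 * (∫ ω, X ω ^ 2 ∂μ) * ∫ ω, Y ω ^ 2 ∂μ + ∫ ω, Y ω ^ 4 ∂μ := by
  rw [hXY.integral_add_pow hX hY]
  simp only [sum_range_succ, range_one, sum_singleton, Nat.choose, pow_zero, pow_one, hX0, hY0,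
    integral_const, probReal_univ, smul_eq_mul, Nat.reduceAdd, Nat.reduceSub, Nat.cast_ofNat,
    Nat.cast_one, tsub_zero, tsub_self, mul_one, one_mul, mul_zero, zero_mul, add_zero]
  ring

lemma IndepFun.covariance_sq_sq_add [IsProbabilityMeasure μ] (hXY : IndepFun X Y μ)
    (hX : MemLp X 4 μ) (hY : MemLp Y 4 μ) (hY0 : μ[Y] = 0) :
    cov[fun ω => X ω ^ 2, fun ω => (X ω + Y ω) ^ 2; μ] = Var[fun ω => X ω ^ 2; μ] := by
  have hpow : ∀ m k : ℕ, IndepFun (fun ω => X ω ^ m) (fun ω => Y ω ^ k) μ := fun m k =>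
    hXY.comp (measurable_id.pow_const m) (measurable_id.pow_const k)
  have hXY2 : MemLp (fun ω => X ω * Y ω) 2 μ := by
    refine (memLp_two_iff_integrable_sq
      (hX.aestronglyMeasurable.mul hY.aestronglyMeasurable)).mpr ?_
    exact ((hpow 2 2).integrable_mul (hX.integrable_pow_of_le (by norm_num))
      (hY.integrable_pow_of_le (by norm_num))).congr (.of_forall fun ω => by simp [mul_pow])
  -- the cross term `X² · XY = X³ · Y` is uncorrelated with `X²` because `E Y = 0`
  have hcross : cov[fun ω => X ω ^ 2, fun ω => X ω * Y ω; μ] = 0 := by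
    rw [covariance_eq_sub hX.sq_of_four hXY2]
    have h3 := (hpow 3 1).integral_fun_mul_eq_mul_integral (hX.aestronglyMeasurable.pow 3)
      (hY.aestronglyMeasurable.pow 1)
    have h1 := hXY.integral_fun_mul_eq_mul_integral hX.aestronglyMeasurable hY.aestronglyMeasurable
    simp only [pow_one, hY0, mul_zero] at h3 h1
    simp only [Pi.mul_apply, h1, mul_zero, sub_zero]
    rw [← h3]
    congr 1 with ω
    ring
  have hsplit : (fun ω => (X ω + Y ω) ^ 2)
      = (fun ω => X ω ^ 2) + ((fun ω => 2 * (X ω * Y ω)) + fun ω => Y ω ^ 2) := by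
    ext ω; simp only [Pi.add_apply]; ring
  rw [hsplit, covariance_add_right hX.sq_of_four hX.sq_of_four
      ((hXY2.const_mul 2).add hY.sq_of_four),
    covariance_add_right hX.sq_of_four (hXY2.const_mul 2) hY.sq_of_four,
    covariance_const_mul_right, hcross,
    (hpow 2 2).covariance_eq_zero hX.sq_of_four hY.sq_of_four,
    covariance_self (X := fun ω => X ω ^ 2) (hX.aestronglyMeasurable.pow 2).aemeasurable]
  ring

end Independence

section SumMoments

variable {Ω ι : Type*} [MeasurableSpace Ω] {μ : Measure Ω} {U : ι → Ω → ℝ}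

lemma integral_sum_eq_zero (hL1 : ∀ i, Integrable (U i) μ) (h0 : ∀ i, μ[U i] = 0)
    (s : Finset ι) : ∫ ω, ∑ i ∈ s, U i ω ∂μ = 0 := by
  rw [integral_finsetSum s fun i _ => hL1 i]
  exact sum_eq_zero fun i _ => h0 i

variable [IsProbabilityMeasure μ]

lemma iIndepFun.integral_sum_sq (h : iIndepFun U μ) (hL2 : ∀ i, MemLp (U i) 2 μ)
    (h0 : ∀ i, μ[U i] = 0) {a : ℝ} (h2 : ∀ i, ∫ ω, U i ω ^ 2 ∂μ = a) (s : Finset ι) :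
    ∫ ω, (∑ i ∈ s, U i ω) ^ 2 ∂μ = #s * a := by
  induction s using Finset.cons_induction with
  | empty => simp
  | cons k s hk ih =>
    have hind := h.indepFun_finsetSum_of_notMem₀ (fun i => (hL2 i).aemeasurable) hk
    rw [sum_fn] at hind
    simp only [sum_cons, add_comm (U k _), card_cons]
    rw [hind.integral_add_sq (memLp_finsetSum s fun i _ => hL2 i) (hL2 k) (h0 k), ih, h2]
    push_cast
    ring

lemma iIndepFun.integral_sum_pow_four (h : iIndepFun U μ) (hL4 : ∀ i, MemLp (U i) 4 μ)
    (h0 : ∀ i, μ[U i] = 0) {a b : ℝ} (h2 : ∀ i, ∫ ω, U i ω ^ 2 ∂μ = a)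
    (h4 : ∀ i, ∫ ω, U i ω ^ 4 ∂μ = b) (s : Finset ι) :
    ∫ ω, (∑ i ∈ s, U i ω) ^ 4 ∂μ = #s * b + 3 * #s * (#s - 1) * a ^ 2 := by
  have hL2 : ∀ i, MemLp (U i) 2 μ := fun i => (hL4 i).mono_exponent (by norm_num)
  induction s using Finset.cons_induction with
  | empty => simp
  | cons k s hk ih =>
    have hind := h.indepFun_finsetSum_of_notMem₀ (fun i => (hL4 i).aemeasurable) hk
    rw [sum_fn] at hind
    simp only [sum_cons, add_comm (U k _), card_cons]
    rw [hind.integral_add_pow_four (memLp_finsetSum s fun i _ => hL4 i) (hL4 k)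
      (integral_sum_eq_zero (fun i => (hL4 i).integrable (by norm_num)) h0 s)
      (h0 k), ih, h.integral_sum_sq hL2 h0 h2, h2, h4]
    push_cast
    ring

lemma iIndepFun.covariance_sq_sum_sq_of_subset (h : iIndepFun U μ) (hL4 : ∀ i, MemLp (U i) 4 μ)
    (h0 : ∀ i, μ[U i] = 0) {s t : Finset ι} (hst : s ⊆ t) :
    cov[fun ω => (∑ i ∈ s, U i ω) ^ 2, fun ω => (∑ i ∈ t, U i ω) ^ 2; μ]
      = Var[fun ω => (∑ i ∈ s, U i ω) ^ 2; μ] := by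
  classical
  have hsplit : (fun ω => (∑ i ∈ t, U i ω) ^ 2)
      = fun ω => (∑ i ∈ s, U i ω + ∑ i ∈ t \ s, U i ω) ^ 2 :=
    funext fun ω => by rw [add_comm, sum_sdiff hst]
  rw [hsplit]
  refine (h.indepFun_finsetSum_finsetSum (fun i => (hL4 i).aemeasurable) disjoint_sdiff)
    |>.covariance_sq_sq_add (memLp_finsetSum _ fun i _ => hL4 i)
      (memLp_finsetSum _ fun i _ => hL4 i)
      (integral_sum_eq_zero (fun i => (hL4 i).integrable (by norm_num)) h0 _)

lemma iIndepFun.variance_sq_sum (h : iIndepFun U μ) (hL4 : ∀ i, MemLp (U i) 4 μ)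
    (h0 : ∀ i, μ[U i] = 0) {a b : ℝ} (h2 : ∀ i, ∫ ω, U i ω ^ 2 ∂μ = a)
    (h4 : ∀ i, ∫ ω, U i ω ^ 4 ∂μ = b) (s : Finset ι) :
    Var[fun ω => (∑ i ∈ s, U i ω) ^ 2; μ] = 2 * (#s * a) ^ 2 + #s * (b - 3 * a ^ 2) := by
  rw [variance_eq_sub (memLp_finsetSum s fun i _ => hL4 i).sq_of_four]
  simp only [Pi.pow_apply, ← pow_mul]
  rw [h.integral_sum_pow_four hL4 h0 h2 h4,
    h.integral_sum_sq (fun i => (hL4 i).mono_exponent (by norm_num)) h0 h2]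
  ring

end SumMoments

section RunningMean

variable {Ω : Type*}

noncomputable def runningMean (U : ℕ → Ω → ℝ) (i : ℕ) (ω : Ω) : ℝ :=
  (1 / (i : ℝ)) * ∑ j ∈ Icc 1 i, U j ω

lemma runningMean_sq (U : ℕ → Ω → ℝ) (i : ℕ) :
    (fun ω => runningMean U i ω ^ 2) = fun ω => ((i : ℝ)⁻¹) ^ 2 * (∑ j ∈ Icc 1 i, U j ω) ^ 2 :=
  funext fun ω => by rw [runningMean, one_div, mul_pow]

variable [MeasurableSpace Ω] {μ : Measure Ω} {U : ℕ → Ω → ℝ}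

lemma memLp_runningMean_sq (hL4 : ∀ i, MemLp (U i) 4 μ) (i : ℕ) :
    MemLp (fun ω => runningMean U i ω ^ 2) 2 μ :=
  ((memLp_finsetSum _ fun j _ => hL4 j).const_mul _).sq_of_four

variable [IsProbabilityMeasure μ]

lemma iIndepFun.covariance_sq_runningMean (h : iIndepFun U μ) (hL4 : ∀ i, MemLp (U i) 4 μ)
    (h0 : ∀ i, μ[U i] = 0) {i j : ℕ} (hij : i ≤ j) :
    cov[fun ω => runningMean U i ω ^ 2, fun ω => runningMean U j ω ^ 2; μ]
      = ((i : ℝ) / j) ^ 2 * Var[fun ω => runningMean U i ω ^ 2; μ] := by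
  rw [runningMean_sq, runningMean_sq, covariance_const_mul_left, covariance_const_mul_right,
    h.covariance_sq_sum_sq_of_subset hL4 h0 (Icc_subset_Icc_right hij), variance_const_mul]
  rcases Nat.eq_zero_or_pos i with rfl | hi
  · simp
  have : (j : ℝ) ≠ 0 := by exact_mod_cast (hi.trans_le hij).ne'
  field_simp

lemma iIndepFun.variance_sq_runningMean (h : iIndepFun U μ) (hL4 : ∀ i, MemLp (U i) 4 μ)
    (h0 : ∀ i, μ[U i] = 0) {a b : ℝ} (h2 : ∀ i, ∫ ω, U i ω ^ 2 ∂μ = a)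
    (h4 : ∀ i, ∫ ω, U i ω ^ 4 ∂μ = b) {i : ℕ} (hi : 0 < i) :
    Var[fun ω => runningMean U i ω ^ 2; μ] = 2 * a ^ 2 / i ^ 2 + (b - 3 * a ^ 2) / i ^ 3 := by
  rw [runningMean_sq, variance_const_mul, h.variance_sq_sum hL4 h0 h2 h4, Nat.card_Icc,
    Nat.add_sub_cancel]
  field_simp

lemma iIndepFun.covariance_sq_runningMean_le (h : iIndepFun U μ) (hL4 : ∀ i, MemLp (U i) 4 μ)
    (h0 : ∀ i, μ[U i] = 0) {a b : ℝ} (h2 : ∀ i, ∫ ω, U i ω ^ 2 ∂μ = a)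
    (h4 : ∀ i, ∫ ω, U i ω ^ 4 ∂μ = b) {i j : ℕ} (hi : 0 < i) (hij : i ≤ j) :
    cov[fun ω => runningMean U i ω ^ 2, fun ω => runningMean U j ω ^ 2; μ]
      ≤ (2 * a ^ 2 + |b - 3 * a ^ 2|) / j ^ 2 := by
  have hi' : (1 : ℝ) ≤ i := by exact_mod_cast hi
  have hj : (0 : ℝ) < j := by exact_mod_cast hi.trans_le hij
  calc cov[_, _; μ] = (2 * a ^ 2 + (b - 3 * a ^ 2) / i) / j ^ 2 := by
        rw [h.covariance_sq_runningMean hL4 h0 hij, h.variance_sq_runningMean hL4 h0 h2 h4 hi]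
        field_simp
    _ ≤ (2 * a ^ 2 + |b - 3 * a ^ 2|) / j ^ 2 := by
        gcongr
        exact (div_le_self (abs_nonneg _) hi').trans'
          (div_le_div_of_nonneg_right (le_abs_self _) (by positivity))

end RunningMean

lemma variance_sum_le_of_covariance_le {Ω : Type*} [MeasurableSpace Ω] {μ : Measure Ω}
    [IsFiniteMeasure μ] {W : ℕ → Ω → ℝ} (hW : ∀ i, MemLp (W i) 2 μ) {C : ℝ} (hC : 0 ≤ C)
    (hcov : ∀ i j, 0 < i → i ≤ j → cov[W i, W j; μ] ≤ C / j ^ 2) {n : ℕ} (hn : 2 ≤ n) :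
    Var[fun ω => ∑ i ∈ Icc 1 n, W i ω; μ] ≤ 9 * C * Real.log n := by
  have hmax : ∀ i ∈ Icc 1 n, ∀ j ∈ Icc 1 n,
      cov[W i, W j; μ] ≤ C * (((max i j : ℕ) : ℝ) ^ 2)⁻¹ := by
    intro i hi j hj
    rcases le_total i j with hij | hji
    · rw [max_eq_right hij, ← div_eq_mul_inv]
      exact hcov i j (mem_Icc.mp hi).1 hij
    · rw [max_eq_left hji, ← div_eq_mul_inv, covariance_comm]
      exact hcov j i (mem_Icc.mp hj).1 hji
  calc Var[fun ω => ∑ i ∈ Icc 1 n, W i ω; μ]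
      = ∑ i ∈ Icc 1 n, ∑ j ∈ Icc 1 n, cov[W i, W j; μ] := variance_fun_sum' fun i _ => hW i
    _ ≤ ∑ i ∈ Icc 1 n, ∑ j ∈ Icc 1 n, C * (((max i j : ℕ) : ℝ) ^ 2)⁻¹ :=
        sum_le_sum fun i hi => sum_le_sum fun j hj => hmax i hi j hj
    _ = C * ∑ i ∈ Icc 1 n, ∑ j ∈ Icc 1 n, (((max i j : ℕ) : ℝ) ^ 2)⁻¹ := by
        simp_rw [mul_sum]
    _ ≤ C * (9 * Real.log n) := by gcongr; exact sum_Icc_sum_Icc_inv_max_sq_le_log hn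
    _ = 9 * C * Real.log n := by ring

end ProbabilityTheory

/-- For `Z₁, Z₂, …` i.i.d. `N(0,σ²)`, `Uᵢ = Zᵢ²/σ² − 1`, and running means
`Ū_i`: for `i < j`, `Cov(Ū_i², Ū_j²) = (i/j)² Var(Ū_i²)`, with
`Var(Ū_i²) = 8/i² + 48/i³`; consequently `Var(Σ_{i=1}^n Ū_i²) = O(log n)`. -/
theorem running_mean_square_variance {Ω : Type*} [MeasurableSpace Ω]
    (μ : Measure Ω) [IsProbabilityMeasure μ]
    (σ : ℝ) (hσ : 0 < σ)
    (Z : ℕ → Ω → ℝ)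
    (hmeas : ∀ i, Measurable (Z i))
    (hindep : iIndepFun Z μ)
    (hZ : ∀ i, Measure.map (Z i) μ = gaussianReal 0 ⟨σ ^ 2, sq_nonneg σ⟩)
    (U : ℕ → Ω → ℝ) (hU : ∀ i ω, U i ω = (Z i ω) ^ 2 / σ ^ 2 - 1)
    (Ubar : ℕ → Ω → ℝ)
    (hUbar : ∀ i ω, Ubar i ω = (1 / (i : ℝ)) * ∑ j ∈ Icc 1 i, U j ω) :
    -- covariance identity for i < j
    (∀ i j : ℕ, 0 < i → i < j →
      (∫ ω, (Ubar i ω) ^ 2 * (Ubar j ω) ^ 2 ∂μ)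
          - (∫ ω, (Ubar i ω) ^ 2 ∂μ) * (∫ ω, (Ubar j ω) ^ 2 ∂μ)
        = ((i : ℝ) / (j : ℝ)) ^ 2 *
            ((∫ ω, ((Ubar i ω) ^ 2) ^ 2 ∂μ) - (∫ ω, (Ubar i ω) ^ 2 ∂μ) ^ 2)) ∧
    -- variance of `Ū_i²`
    (∀ i : ℕ, 0 < i →
      (∫ ω, ((Ubar i ω) ^ 2) ^ 2 ∂μ) - (∫ ω, (Ubar i ω) ^ 2 ∂μ) ^ 2
        = 8 / (i : ℝ) ^ 2 + 48 / (i : ℝ) ^ 3) ∧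
    -- `Var(Σ_{i=1}^n Ū_i²) = O(log n)`
    (∃ C : ℝ, ∀ n : ℕ, 2 ≤ n →
      (∫ ω, (∑ i ∈ Icc 1 n, (Ubar i ω) ^ 2) ^ 2 ∂μ)
          - (∫ ω, ∑ i ∈ Icc 1 n, (Ubar i ω) ^ 2 ∂μ) ^ 2
        ≤ C * Real.log n) := by
  obtain rfl : Ubar = runningMean U := funext₂ hUbar
  obtain rfl : U = fun i ω => (Z i ω / σ) ^ 2 - 1 := funext₂ fun i ω => by rw [hU, div_pow]
  have hY i := HasLaw.div_of_gaussianReal hσ.ne' ⟨(hmeas i).aemeasurable, hZ i⟩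
  have hind : iIndepFun (fun i ω => (Z i ω / σ) ^ 2 - 1) μ :=
    hindep.comp (fun _ x => (x / σ) ^ 2 - 1) fun _ => by fun_prop
  have hL4 i := (hY i).memLp_sq_sub_one 4
  have h0 i := (hY i).integral_sq_sub_one
  have h2 i := (hY i).integral_sq_sub_one_sq
  have h4 i := (hY i).integral_sq_sub_one_pow_four
  have hW := memLp_runningMean_sq (μ := μ) hL4
  refine ⟨fun i j _ hij => ?_, fun i hi => ?_,
    ⟨9 * (2 * 2 ^ 2 + |60 - 3 * 2 ^ 2|), fun n hn => ?_⟩⟩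
  · have := hind.covariance_sq_runningMean hL4 h0 hij.le
    rw [covariance_eq_sub (hW i) (hW j), variance_eq_sub (hW i)] at this
    simpa using this
  · have := hind.variance_sq_runningMean hL4 h0 h2 h4 hi
    rw [variance_eq_sub (hW i)] at this
    norm_num at this
    simpa using this
  · have := variance_sum_le_of_covariance_le hW (by positivity)
      (fun i j hi hij => hind.covariance_sq_runningMean_le hL4 h0 h2 h4 hi hij) hn
    rw [variance_eq_sub (memLp_finsetSum _ fun i _ => hW i)] at this
    simpa using this
end
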